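/- Let X and Y be finite types and let p be a joint pmf on X × Y whose marginals p_X and p_Y are everywhere positive. Then there exist an integer N = min(|X|, |Y|), real numbers 1 = σ₁ ≥ σ₂ ≥ … ≥ σ_N ≥ 0, and functions φ₁, …, φ_N : X → ℝ and ψ₁, …, ψ_N : Y → ℝ such that: (i) the density ratio decomposes as p(x, y) / (p_X(x) p_Y(y)) = ∑_{k=1}^N √(σ_k) φ_k(x) ψ_k(y) for all (x, y); (ii) the φ_k are orthonormal in L²(p_X), i.e., ∑_x p_X(x) φ_k(x) φ_{k'}(x) equals 1 if k = k' and 0 otherwise; (iii) the ψ_k are orthonormal in L²(p_Y), i.e., ∑_y p_Y(y) ψ_k(y) ψ_{k'}(y) equals 1 if k = k' and 0 otherwise. -/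

import Mathlib

/-!
Write `q = p_X`, `r = p_Y` and `B x y = p (x, y) / (√(q x) * √(r y))`, so that the density ratio is
`B x y / (√(q x) * √(r y))`. A singular value decomposition `B = ∑ₖ √σₖ fₖ eₖᵀ`, with `σₖ` the
eigenvalues of `Bᵀ B`, `eₖ` an orthonormal eigenbasis and `fₖ` orthonormal, yields the decomposition
with `φₖ = fₖ / √q` and `ψₖ = eₖ / √r`, which are orthonormal for the weights `q` and `r`.
By Cauchy–Schwarz `B` is a contraction, so every `σₖ ≤ 1`; and `B √r = √q`, `Bᵀ √q = √r` make `√r`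
an eigenvector of `Bᵀ B` for the eigenvalue `1`. Swapping `X` and `Y` handles `|X| < |Y|`.
-/

open Finset Matrix

/-- Marginal pmf of the first coordinate of a joint pmf on `X × Y`. -/
noncomputable def margX {X Y : Type*} [Fintype Y] (p : X × Y → ℝ) (x : X) : ℝ :=
  ∑ y, p (x, y)

/-- Marginal pmf of the second coordinate of a joint pmf on `X × Y`. -/
noncomputable def margY {X Y : Type*} [Fintype X] (p : X × Y → ℝ) (y : Y) : ℝ :=
  ∑ x, p (x, y)

open Module InnerProductSpace

theorem Orthonormal.exists_orthonormal_extension_of_card_le {𝕜 E ι : Type*} [RCLike 𝕜]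
    [NormedAddCommGroup E] [InnerProductSpace 𝕜 E] [FiniteDimensional 𝕜 E] [Fintype ι]
    (hι : Fintype.card ι ≤ finrank 𝕜 E) {v : ι → E} {s : Set ι}
    (hv : Orthonormal 𝕜 (s.domRestrict v)) :
    ∃ w : ι → E, Orthonormal 𝕜 w ∧ ∀ i ∈ s, w i = v i := by
  let κ := ι ⊕ Fin (finrank 𝕜 E - Fintype.card ι)
  have hκ : finrank 𝕜 E = Fintype.card κ := by
    simp only [κ, Fintype.card_sum, Fintype.card_fin]; omega
  let e : s ≃ (Sum.inl '' s : Set κ) := Equiv.Set.image Sum.inl s Sum.inl_injective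
  have hv' : Orthonormal 𝕜 ((Sum.inl '' s : Set κ).domRestrict (Sum.elim v 0)) := by
    convert hv.comp _ e.symm.injective
    ext j
    conv_lhs => rw [← e.apply_symm_apply j]
    rfl
  obtain ⟨b, hb⟩ := hv'.exists_orthonormalBasis_extension_of_card_eq hκ
  exact ⟨b ∘ Sum.inl, b.orthonormal.comp _ Sum.inl_injective,
    fun i hi => hb _ (Set.mem_image_of_mem _ hi)⟩

namespace LinearMap

variable {𝕜 E F : Type*} [RCLike 𝕜]
  [NormedAddCommGroup E] [InnerProductSpace 𝕜 E] [FiniteDimensional 𝕜 E]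
  [NormedAddCommGroup F] [InnerProductSpace 𝕜 F] [FiniteDimensional 𝕜 F]
  (T : E →ₗ[𝕜] F) {n : ℕ} (hn : finrank 𝕜 E = n)

theorem inner_apply_eigenvectorBasis_adjoint_comp_self (i j : Fin n) :
    inner 𝕜 (T (T.isSymmetric_adjoint_comp_self.eigenvectorBasis hn i))
      (T (T.isSymmetric_adjoint_comp_self.eigenvectorBasis hn j)) =
      if i = j then (T.isSymmetric_adjoint_comp_self.eigenvalues hn i : 𝕜) else 0 := by
  rw [← adjoint_inner_right, ← comp_apply, IsSymmetric.apply_eigenvectorBasis, inner_smul_right,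
    orthonormal_iff_ite.1 (IsSymmetric.eigenvectorBasis _ hn).orthonormal]
  split_ifs with h <;> simp [h]

theorem norm_sq_apply_eigenvectorBasis_adjoint_comp_self (i : Fin n) :
    ‖T (T.isSymmetric_adjoint_comp_self.eigenvectorBasis hn i)‖ ^ 2 =
      T.isSymmetric_adjoint_comp_self.eigenvalues hn i := by
  have h := T.inner_apply_eigenvectorBasis_adjoint_comp_self hn i i
  rw [if_pos rfl, inner_self_eq_norm_sq_to_K] at h
  exact_mod_cast h

theorem exists_orthonormal_apply_eigenvectorBasis_adjoint_comp_self (hnF : n ≤ finrank 𝕜 F) :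
    ∃ f : Fin n → F, Orthonormal 𝕜 f ∧ ∀ i,
      T (T.isSymmetric_adjoint_comp_self.eigenvectorBasis hn i) =
        (√(T.isSymmetric_adjoint_comp_self.eigenvalues hn i) : 𝕜) • f i := by
  have hinner := T.inner_apply_eigenvectorBasis_adjoint_comp_self hn
  have hnorm := T.norm_sq_apply_eigenvectorBasis_adjoint_comp_self hn
  set e := T.isSymmetric_adjoint_comp_self.eigenvectorBasis hn
  set μ := T.isSymmetric_adjoint_comp_self.eigenvalues hn
  have hμ : ∀ i, 0 ≤ μ i := T.isPositive_adjoint_comp_self.nonneg_eigenvalues hn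
  let v i := ((√(μ i))⁻¹ : 𝕜) • T (e i)
  have hv : Orthonormal 𝕜 ({i | μ i ≠ 0}.domRestrict v) := by
    rw [orthonormal_iff_ite]
    rintro ⟨i, hi⟩ ⟨j, hj⟩
    simp only [Set.domRestrict_apply, v, inner_smul_left, inner_smul_right,
      hinner, Subtype.mk.injEq]
    split_ifs with h
    · subst h
      have h1 : (√(μ i))⁻¹ * ((√(μ i))⁻¹ * μ i) = 1 := by
        rw [← mul_assoc, ← mul_inv, Real.mul_self_sqrt (hμ i), inv_mul_cancel₀ hi]
      simp only [map_inv₀, RCLike.conj_ofReal]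
      exact_mod_cast h1
    · simp
  obtain ⟨f, hf, hfv⟩ := hv.exists_orthonormal_extension_of_card_le (by simpa [hn] using hnF)
  refine ⟨f, hf, fun i => ?_⟩
  by_cases hi : μ i = 0
  · rw [hi, Real.sqrt_zero, RCLike.ofReal_zero, zero_smul, ← norm_eq_zero, ← sq_eq_zero_iff,
      hnorm, hi]
  · have hsqrt : (√(μ i) : 𝕜) ≠ 0 :=
      RCLike.ofReal_ne_zero.2 (Real.sqrt_ne_zero'.2 ((hμ i).lt_of_ne' hi))
    rw [hfv i hi, smul_smul, mul_inv_cancel₀ hsqrt, one_smul]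

end LinearMap

theorem Matrix.apply_eq_sum_of_toEuclideanLin_eq_smul {𝕜 m n ι : Type*} [RCLike 𝕜] [Fintype n]
    [DecidableEq n] [Fintype ι] (A : Matrix m n 𝕜) (e : OrthonormalBasis ι 𝕜 (EuclideanSpace 𝕜 n))
    (f : ι → EuclideanSpace 𝕜 m) (s : ι → 𝕜) (h : ∀ i, toEuclideanLin A (e i) = s i • f i)
    (x : m) (y : n) : A x y = ∑ i, s i * f i x * star (e i y) := by
  have hcol : toEuclideanLin A (EuclideanSpace.single y 1) = ∑ i, star (e i y) • s i • f i := by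
    conv_lhs => rw [← e.sum_repr' (EuclideanSpace.single y 1)]
    simp [EuclideanSpace.inner_single_right, h]
  have hentry := congrArg (fun v => v x) hcol
  simp only [ofLp_toLpLin, PiLp.ofLp_single, toLin'_apply, mulVec_single, MulOpposite.op_one,
    Pi.smul_apply, col_apply, one_smul, WithLp.ofLp_sum, WithLp.ofLp_smul, Finset.sum_apply,
    smul_eq_mul] at hentry
  rw [hentry]
  exact Finset.sum_congr rfl fun i _ => by ring

theorem Orthonormal.sum_mul_div_sqrt_mul_div_sqrt {ι X : Type*} [Fintype X] [DecidableEq ι]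
    {u : ι → EuclideanSpace ℝ X} (hu : Orthonormal ℝ u) {w : X → ℝ} (hw : ∀ x, 0 < w x)
    (k k' : ι) : ∑ x, w x * (u k x / √(w x) * (u k' x / √(w x))) = if k = k' then 1 else 0 := by
  rw [← orthonormal_iff_ite.1 hu k k', PiLp.inner_apply]
  refine Finset.sum_congr rfl fun x _ => ?_
  have hx := Real.sqrt_pos.2 (hw x)
  simp only [RCLike.inner_apply, conj_trivial]
  field_simp
  rw [Real.sq_sqrt (hw x).le]
  ring

theorem margX_comp_swap {X Y : Type*} [Fintype X] (p : X × Y → ℝ) :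
    margX (fun z : Y × X => p z.swap) = margY p := rfl

theorem margY_comp_swap {X Y : Type*} [Fintype Y] (p : X × Y → ℝ) :
    margY (fun z : Y × X => p z.swap) = margX p := rfl

section NormalizedJoint

variable {X Y : Type*} [Fintype X] [Fintype Y] (p : X × Y → ℝ)

noncomputable def normalizedJoint : Matrix X Y ℝ :=
  of fun x y => p (x, y) / (√(margX p x) * √(margY p y))

theorem normalizedJoint_comp_swap :
    normalizedJoint (fun z : Y × X => p z.swap) = (normalizedJoint p)ᵀ := by
  ext y x
  simp [normalizedJoint, margX_comp_swap, margY_comp_swap, mul_comm]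

theorem normalizedJoint_mulVec_sqrt_margY (hY : ∀ y, 0 < margY p y) :
    normalizedJoint p *ᵥ (fun y => √(margY p y)) = fun x => √(margX p x) := by
  funext x
  calc ∑ y, p (x, y) / (√(margX p x) * √(margY p y)) * √(margY p y)
      = (∑ y, p (x, y)) / √(margX p x) := by
        rw [Finset.sum_div]
        refine Finset.sum_congr rfl fun y _ => ?_
        have := Real.sqrt_pos.2 (hY y)
        field_simp
    _ = √(margX p x) := Real.div_sqrt

theorem normalizedJoint_transpose_mulVec_sqrt_margX (hX : ∀ x, 0 < margX p x) :
    (normalizedJoint p)ᵀ *ᵥ (fun x => √(margX p x)) = fun y => √(margY p y) := by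
  rw [← normalizedJoint_comp_swap]
  exact normalizedJoint_mulVec_sqrt_margY _ hX

theorem sq_normalizedJoint_mulVec_le (hp0 : ∀ z, 0 ≤ p z) (hX : ∀ x, 0 < margX p x)
    (hY : ∀ y, 0 < margY p y) (g : Y → ℝ) (x : X) :
    (normalizedJoint p *ᵥ g) x ^ 2 ≤ ∑ y, p (x, y) * (g y ^ 2 / margY p y) := by
  have hmulVec : (normalizedJoint p *ᵥ g) x =
      (∑ y, p (x, y) * (g y / √(margY p y))) / √(margX p x) := by
    simp only [mulVec, dotProduct, normalizedJoint, of_apply, Finset.sum_div]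
    refine Finset.sum_congr rfl fun y _ => ?_
    have := Real.sqrt_pos.2 (hX x)
    have := Real.sqrt_pos.2 (hY y)
    field_simp
  have hcs : (∑ y, p (x, y) * (g y / √(margY p y))) ^ 2 ≤
      margX p x * ∑ y, p (x, y) * (g y ^ 2 / margY p y) :=
    Finset.sum_sq_le_sum_mul_sum_of_sq_le_mul _ (fun y _ => hp0 _)
      (fun y _ => mul_nonneg (hp0 _) (div_nonneg (sq_nonneg _) (hY y).le)) fun y _ =>
        le_of_eq <| by rw [mul_pow, div_pow, Real.sq_sqrt (hY y).le]; ring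
  rw [hmulVec, div_pow, Real.sq_sqrt (hX x).le, div_le_iff₀ (hX x)]
  linarith

theorem norm_toEuclideanLin_normalizedJoint_le [DecidableEq Y] (hp0 : ∀ z, 0 ≤ p z)
    (hX : ∀ x, 0 < margX p x) (hY : ∀ y, 0 < margY p y) (g : EuclideanSpace ℝ Y) :
    ‖toEuclideanLin (normalizedJoint p) g‖ ≤ ‖g‖ := by
  refine le_of_sq_le_sq ?_ (norm_nonneg g)
  simp only [EuclideanSpace.norm_sq_eq, Real.norm_eq_abs, sq_abs, toLpLin_apply]
  calc ∑ x, (normalizedJoint p *ᵥ g) x ^ 2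
      ≤ ∑ x, ∑ y, p (x, y) * (g y ^ 2 / margY p y) :=
        Finset.sum_le_sum fun x _ => sq_normalizedJoint_mulVec_le p hp0 hX hY g x
    _ = ∑ y, margY p y * (g y ^ 2 / margY p y) := by
        rw [Finset.sum_comm]
        simp only [margY, Finset.sum_mul]
    _ = ∑ y, g y ^ 2 := Finset.sum_congr rfl fun y _ => mul_div_cancel₀ _ (hY y).ne'

theorem hasEigenvalue_one_adjoint_comp_toEuclideanLin_normalizedJoint [DecidableEq X]
    [DecidableEq Y] [Nonempty Y] (hX : ∀ x, 0 < margX p x) (hY : ∀ y, 0 < margY p y) :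
    End.HasEigenvalue
      (LinearMap.adjoint (toEuclideanLin (normalizedJoint p)) ∘ₗ
        toEuclideanLin (normalizedJoint p)) 1 := by
  have hfix : (LinearMap.adjoint (toEuclideanLin (normalizedJoint p)) ∘ₗ
      toEuclideanLin (normalizedJoint p)) (WithLp.toLp 2 fun y => √(margY p y)) =
        WithLp.toLp 2 fun y => √(margY p y) := by
    rw [← toEuclideanLin_conjTranspose_eq_adjoint, conjTranspose_eq_transpose_of_trivial]
    simp only [LinearMap.comp_apply, toLpLin_toLp, toLin'_apply,
      normalizedJoint_mulVec_sqrt_margY p hY, normalizedJoint_transpose_mulVec_sqrt_margX p hX]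
  refine End.hasEigenvalue_of_hasEigenvector ⟨End.mem_eigenspace_iff.2 (by rw [hfix, one_smul]), ?_⟩
  intro h
  exact (Real.sqrt_pos.2 (hY (Classical.arbitrary Y))).ne' <| by
    simpa using congrArg (fun v : EuclideanSpace ℝ Y => v (Classical.arbitrary Y)) h

end NormalizedJoint

structure IsDensityRatioDecomposition {X Y : Type*} [Fintype X] [Fintype Y] {N : ℕ}
    (p : X × Y → ℝ) (σ : Fin N → ℝ) (φ : Fin N → X → ℝ) (ψ : Fin N → Y → ℝ) : Prop where
  antitone : Antitone σ
  nonneg : ∀ k, 0 ≤ σ k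
  le_one : ∀ k, σ k ≤ 1
  exists_eq_one : ∃ k, σ k = 1
  density_ratio_eq : ∀ x y, p (x, y) / (margX p x * margY p y) =
    ∑ k, Real.sqrt (σ k) * φ k x * ψ k y
  orthonormal_left : ∀ k k', ∑ x, margX p x * (φ k x * φ k' x) = if k = k' then (1 : ℝ) else 0
  orthonormal_right : ∀ k k', ∑ y, margY p y * (ψ k y * ψ k' y) = if k = k' then (1 : ℝ) else 0

namespace IsDensityRatioDecomposition

variable {X Y : Type*} [Fintype X] [Fintype Y] {N : ℕ} {p : X × Y → ℝ} {σ : Fin N → ℝ}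
  {φ : Fin N → X → ℝ} {ψ : Fin N → Y → ℝ}

theorem of_comp_swap (h : IsDensityRatioDecomposition (fun z : Y × X => p z.swap) σ ψ φ) :
    IsDensityRatioDecomposition p σ φ ψ where
  antitone := h.antitone
  nonneg := h.nonneg
  le_one := h.le_one
  exists_eq_one := h.exists_eq_one
  density_ratio_eq x y := by
    rw [mul_comm, ← margX_comp_swap, ← margY_comp_swap]
    refine (h.density_ratio_eq y x).trans (Finset.sum_congr rfl fun k _ => ?_)
    ring
  orthonormal_left := h.orthonormal_right
  orthonormal_right := h.orthonormal_left

theorem apply_zero (h : IsDensityRatioDecomposition p σ φ ψ) (hN : 0 < N) : σ ⟨0, hN⟩ = 1 := by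
  obtain ⟨k, hk⟩ := h.exists_eq_one
  exact le_antisymm (h.le_one _) (hk ▸ h.antitone (Nat.zero_le k.val))

end IsDensityRatioDecomposition

theorem exists_isDensityRatioDecomposition_of_card_le {X Y : Type*} [Fintype X] [Fintype Y]
    [Nonempty Y] {N : ℕ} (p : X × Y → ℝ) (hp0 : ∀ z, 0 ≤ p z) (hX : ∀ x, 0 < margX p x)
    (hY : ∀ y, 0 < margY p y) (hN : Fintype.card Y = N) (hYX : Fintype.card Y ≤ Fintype.card X) :
    ∃ (σ : Fin N → ℝ) (φ : Fin N → X → ℝ) (ψ : Fin N → Y → ℝ),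
      IsDensityRatioDecomposition p σ φ ψ := by
  classical
  set T := toEuclideanLin (normalizedJoint p)
  have hn : finrank ℝ (EuclideanSpace ℝ Y) = N := by rw [finrank_euclideanSpace, hN]
  have hNX : N ≤ finrank ℝ (EuclideanSpace ℝ X) := by rwa [finrank_euclideanSpace, ← hN]
  obtain ⟨f, hf, hTf⟩ := T.exists_orthonormal_apply_eigenvectorBasis_adjoint_comp_self hn hNX
  set e := T.isSymmetric_adjoint_comp_self.eigenvectorBasis hn
  refine ⟨T.isSymmetric_adjoint_comp_self.eigenvalues hn, fun k x => f k x / √(margX p x),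
    fun k y => e k y / √(margY p y),
    { antitone := T.isSymmetric_adjoint_comp_self.eigenvalues_antitone hn
      nonneg := T.isPositive_adjoint_comp_self.nonneg_eigenvalues hn
      le_one := fun k => ?_
      exists_eq_one := T.isSymmetric_adjoint_comp_self.exists_eigenvalues_eq hn
        (hasEigenvalue_one_adjoint_comp_toEuclideanLin_normalizedJoint p hX hY)
      density_ratio_eq := fun x y => ?_
      orthonormal_left := hf.sum_mul_div_sqrt_mul_div_sqrt hX
      orthonormal_right := e.orthonormal.sum_mul_div_sqrt_mul_div_sqrt hY }⟩
  · rw [← T.norm_sq_apply_eigenvectorBasis_adjoint_comp_self hn k]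
    have hle := norm_toEuclideanLin_normalizedJoint_le p hp0 hX hY (e k)
    rw [e.orthonormal.1 k] at hle
    exact pow_le_one₀ (norm_nonneg _) hle
  · have hsq (w : ℝ) (hw : 0 < w) : √w * √w = w := Real.mul_self_sqrt hw.le
    calc p (x, y) / (margX p x * margY p y)
        = normalizedJoint p x y / (√(margX p x) * √(margY p y)) := by
          rw [normalizedJoint, of_apply, div_div, mul_mul_mul_comm, hsq _ (hX x), hsq _ (hY y)]
      _ = _ := by
          rw [(normalizedJoint p).apply_eq_sum_of_toEuclideanLin_eq_smul e f _ hTf x y,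
            Finset.sum_div]
          refine Finset.sum_congr rfl fun k _ => ?_
          simp only [star_trivial, RCLike.ofReal_real_eq_id, id]
          ring

theorem exists_isDensityRatioDecomposition {X Y : Type*} [Fintype X] [Fintype Y] [Nonempty X]
    [Nonempty Y] {N : ℕ} (p : X × Y → ℝ) (hp0 : ∀ z, 0 ≤ p z) (hX : ∀ x, 0 < margX p x)
    (hY : ∀ y, 0 < margY p y) (hN : min (Fintype.card X) (Fintype.card Y) = N) :
    ∃ (σ : Fin N → ℝ) (φ : Fin N → X → ℝ) (ψ : Fin N → Y → ℝ),
      IsDensityRatioDecomposition p σ φ ψ := by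
  rcases le_total (Fintype.card Y) (Fintype.card X) with hYX | hXY
  · exact exists_isDensityRatioDecomposition_of_card_le p hp0 hX hY
      ((min_eq_right hYX).symm.trans hN) hYX
  · obtain ⟨σ, ψ, φ, h⟩ := exists_isDensityRatioDecomposition_of_card_le
      (fun z : Y × X => p z.swap) (fun z => hp0 z.swap) hY hX ((min_eq_left hXY).symm.trans hN) hXY
    exact ⟨σ, φ, ψ, h.of_comp_swap⟩

theorem density_ratio_orthonormal_decomposition_general {X Y : Type*} [Fintype X] [Fintype Y]
    [Nonempty X] [Nonempty Y]
    (p : X × Y → ℝ) (hp0 : ∀ z, 0 ≤ p z)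
    (hX : ∀ x, 0 < margX p x) (hY : ∀ y, 0 < margY p y) :
    ∃ σ : Fin (min (Fintype.card X) (Fintype.card Y)) → ℝ,
    ∃ φ : Fin (min (Fintype.card X) (Fintype.card Y)) → X → ℝ,
    ∃ ψ : Fin (min (Fintype.card X) (Fintype.card Y)) → Y → ℝ,
      σ ⟨0, lt_min Fintype.card_pos Fintype.card_pos⟩ = 1 ∧
      Antitone σ ∧ (∀ k, 0 ≤ σ k) ∧
      (∀ x y, p (x, y) / (margX p x * margY p y) =
        ∑ k, Real.sqrt (σ k) * φ k x * ψ k y) ∧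
      (∀ k k', ∑ x, margX p x * (φ k x * φ k' x) = if k = k' then (1 : ℝ) else 0) ∧
      (∀ k k', ∑ y, margY p y * (ψ k y * ψ k' y) = if k = k' then (1 : ℝ) else 0) := by
  obtain ⟨σ, φ, ψ, h⟩ := exists_isDensityRatioDecomposition p hp0 hX hY rfl
  exact ⟨σ, φ, ψ, h.apply_zero _, h.antitone, h.nonneg, h.density_ratio_eq, h.orthonormal_left,
    h.orthonormal_right⟩

/-- orthonormal decomposition of the density ratio, Eq. (1) of the
paper, for finite types. For a joint pmf `p` on finite `X × Y` with
everywhere-positive marginals, there exist `N = min(|X|, |Y|)` numbers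
`1 = σ₁ ≥ σ₂ ≥ … ≥ σ_N ≥ 0` and functions `φ_k : X → ℝ`, `ψ_k : Y → ℝ` such that
`p(x,y)/(p_X(x) p_Y(y)) = ∑ₖ √(σₖ) φₖ(x) ψₖ(y)`, with the `φ_k` orthonormal in
`L²(p_X)` and the `ψ_k` orthonormal in `L²(p_Y)`. -/
theorem density_ratio_orthonormal_decomposition {X Y : Type*} [Fintype X] [Fintype Y]
    [Nonempty X] [Nonempty Y]
    (p : X × Y → ℝ) (hp0 : ∀ z, 0 ≤ p z) (hp1 : ∑ z : X × Y, p z = 1)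
    (hX : ∀ x, 0 < margX p x) (hY : ∀ y, 0 < margY p y) :
    ∃ σ : Fin (min (Fintype.card X) (Fintype.card Y)) → ℝ,
    ∃ φ : Fin (min (Fintype.card X) (Fintype.card Y)) → X → ℝ,
    ∃ ψ : Fin (min (Fintype.card X) (Fintype.card Y)) → Y → ℝ,
      σ ⟨0, lt_min Fintype.card_pos Fintype.card_pos⟩ = 1 ∧
      Antitone σ ∧ (∀ k, 0 ≤ σ k) ∧
      (∀ x y, p (x, y) / (margX p x * margY p y) =
        ∑ k, Real.sqrt (σ k) * φ k x * ψ k y) ∧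
      (∀ k k', ∑ x, margX p x * (φ k x * φ k' x) = if k = k' then (1 : ℝ) else 0) ∧
      (∀ k k', ∑ y, margY p y * (ψ k y * ψ k' y) = if k = k' then (1 : ℝ) else 0) :=
  density_ratio_orthonormal_decomposition_general p hp0 hX hY
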